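/- arXiv:1904.06013 — 3 statements merged into one kernel-verified Lean document; each statement's English description precedes it below -/
import Mathlib

section
/- Let C = {(x₁, x₂) ∈ ℝ² : x₁ ≥ 0, x₂ ≥ 0}, f₁(x, y) = x₂y₁ − x₁y₂ and f₂(x, y) = x₁y₂ − x₂y₁. Then Sol(C, (1/2) f₁ + (1/2) f₂) is NOT a subset of Sol(C, f₁) ∩ Sol(C, f₂); for instance (1, 1) ∈ Sol(C, (1/2) f₁ + (1/2) f₂) but (1, 1) ∉ Sol(C, f₁) ∩ Sol(C, f₂). -/
/-- The nonnegative quadrant `C = {(x₁,x₂) ∈ ℝ² : x₁ ≥ 0, x₂ ≥ 0}`. -/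
def Quad : Set (ℝ × ℝ) := {p | 0 ≤ p.1 ∧ 0 ≤ p.2}

/-- `f₁(x,y) = x₂y₁ − x₁y₂`. -/
def f1 (x y : ℝ × ℝ) : ℝ := x.2 * y.1 - x.1 * y.2

/-- `f₂(x,y) = x₁y₂ − x₂y₁`. -/
def f2 (x y : ℝ × ℝ) : ℝ := x.1 * y.2 - x.2 * y.1

/-- Solution set of the equilibrium problem `EP(C, f)`. -/
def Sol (C : Set (ℝ × ℝ)) (f : ℝ × ℝ → ℝ × ℝ → ℝ) : Set (ℝ × ℝ) :=
  {x ∈ C | ∀ y ∈ C, 0 ≤ f x y}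

/-- `Sol(C, (1/2)f₁ + (1/2)f₂)` is not contained in
`Sol(C, f₁) ∩ Sol(C, f₂)`; for instance `(1,1)` solves the combined problem but
is not a common solution. -/
theorem combination_sol_not_subset :
    ¬ (Sol Quad (fun x y => (1 / 2) * f1 x y + (1 / 2) * f2 x y) ⊆
        Sol Quad f1 ∩ Sol Quad f2) ∧
    ((1 : ℝ), (1 : ℝ)) ∈ Sol Quad (fun x y => (1 / 2) * f1 x y + (1 / 2) * f2 x y) ∧
    ((1 : ℝ), (1 : ℝ)) ∉ Sol Quad f1 ∩ Sol Quad f2 := by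
  have hmem : ((1 : ℝ), (1 : ℝ)) ∈
      Sol Quad (fun x y => (1 / 2) * f1 x y + (1 / 2) * f2 x y) := by
    refine ⟨⟨by norm_num, by norm_num⟩, fun y hy => ?_⟩
    simp [f1, f2]; ring_nf
    exact le_refl 0

  have hnot : ((1 : ℝ), (1 : ℝ)) ∉ Sol Quad f1 ∩ Sol Quad f2 := by
    rintro ⟨⟨-, h⟩, -⟩
    have := h ((0 : ℝ), (1 : ℝ)) ⟨le_refl 0, by norm_num⟩
    simp [f1] at this
    linarith
  exact ⟨fun hsub => hnot (hsub hmem), hmem, hnot⟩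
end

section
/- For every natural number N ≥ 2 there exist a nonempty closed convex set C ⊆ ℝ², bifunctions f₁, …, f_N : C × C → ℝ each satisfying (A1) fᵢ(x, x) = 0 for all x ∈ C, (A2) fᵢ(x, y) + fᵢ(y, x) ≤ 0 for all x, y ∈ C, (A3) limsup_{t → 0⁺} fᵢ(tz + (1−t)x, y) ≤ fᵢ(x, y) for all x, y, z ∈ C, and (A4) y ↦ fᵢ(x, y) is lower semicontinuous and convex on C for each x ∈ C, together with weights α₁, …, α_N ∈ (0, 1) with α₁ + ⋯ + α_N = 1, such that Sol(C, Σᵢ₌₁ᴺ αᵢ fᵢ) is not a subset of ∩ᵢ₌₁ᴺ Sol(C, fᵢ). Moreover these can be chosen so that ∩ᵢ₌₁ᴺ Sol(C, fᵢ) is nonempty. -/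
open Filter Topology

lemma sum_c (N : ℕ) (hN : 2 ≤ N) :
    (∑ i : Fin N, (if (i : ℕ) = 0 then (1:ℝ) else if (i : ℕ) = 1 then -1 else 0)) = 0 := by
  have h0 : (0:ℕ) < N := by omega
  have h1 : (1:ℕ) < N := by omega
  have key : ∀ i : Fin N, (if (i : ℕ) = 0 then (1:ℝ) else if (i : ℕ) = 1 then -1 else 0)
      = (if i = ⟨0, h0⟩ then (1:ℝ) else 0) + (if i = ⟨1, h1⟩ then (-1:ℝ) else 0) := by
    rintro ⟨v, hv⟩
    simp only [Fin.ext_iff]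
    split_ifs <;> simp_all
  rw [Finset.sum_congr rfl (fun i _ => key i), Finset.sum_add_distrib,
    Finset.sum_ite_eq' Finset.univ, Finset.sum_ite_eq' Finset.univ]
  simp

/-- Theorem 3.1: for every `N ≥ 2` there are a nonempty closed
convex set `C ⊆ ℝ²`, bifunctions `f₁, …, f_N` satisfying (A1)–(A4), and weights
`αᵢ ∈ (0,1)` summing to `1`, such that `Sol(C, ∑ αᵢ fᵢ) ⊄ ∩ᵢ Sol(C, fᵢ)`,
and moreover `∩ᵢ Sol(C, fᵢ) ≠ ∅`. -/
theorem exists_combination_sol_not_subset (N : ℕ) (hN : 2 ≤ N) :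
    ∃ (C : Set (ℝ × ℝ)) (f : Fin N → ℝ × ℝ → ℝ × ℝ → ℝ) (α : Fin N → ℝ),
      C.Nonempty ∧ IsClosed C ∧ Convex ℝ C ∧
      (∀ i, ∀ x ∈ C, f i x x = 0) ∧
      (∀ i, ∀ x ∈ C, ∀ y ∈ C, f i x y + f i y x ≤ 0) ∧
      (∀ i, ∀ x ∈ C, ∀ y ∈ C, ∀ z ∈ C,
        Filter.limsup (fun t : ℝ => f i (t • z + (1 - t) • x) y) (𝓝[>] (0 : ℝ))
          ≤ f i x y) ∧
      (∀ i, ∀ x ∈ C, LowerSemicontinuousOn (fun y => f i x y) C ∧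
        ConvexOn ℝ C (fun y => f i x y)) ∧
      (∀ i, α i ∈ Set.Ioo (0 : ℝ) 1) ∧ (∑ i, α i = 1) ∧
      ¬ (Sol C (fun x y => ∑ i, α i * f i x y) ⊆ ⋂ i, Sol C (f i)) ∧
      (⋂ i, Sol C (f i)).Nonempty := by
  have hN0 : (0:ℝ) < (N:ℝ) := by exact_mod_cast (by omega : 0 < N)
  have hN1 : (1:ℝ) < (N:ℝ) := by exact_mod_cast (by omega : 1 < N)
  refine ⟨Set.Icc ((-1,-1) : ℝ × ℝ) (1,1),
    fun i x y => (if (i : ℕ) = 0 then (1:ℝ) else if (i : ℕ) = 1 then -1 else 0) *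
      (x.2 * (y.1 - x.1) - x.1 * (y.2 - x.2)),
    fun _ => (N:ℝ)⁻¹, ?_, isClosed_Icc, convex_Icc _ _, ?_, ?_, ?_, ?_, ?_, ?_, ?_, ?_⟩
  · exact ⟨(0,0), by simp [Set.mem_Icc, Prod.le_def]⟩
  · intro i x _; ring
  · intro i x _ y _; exact le_of_eq (by ring)
  · -- A3: limsup of a continuous function
    intro i x _ y _ z _
    set c : ℝ := (if (i : ℕ) = 0 then (1:ℝ) else if (i : ℕ) = 1 then -1 else 0) with hc
    have heq : (fun t : ℝ => c * ((t • z + (1 - t) • x).2 * (y.1 - (t • z + (1 - t) • x).1) -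
        (t • z + (1 - t) • x).1 * (y.2 - (t • z + (1 - t) • x).2)))
        = fun t : ℝ => c * ((t * z.2 + (1 - t) * x.2) * (y.1 - (t * z.1 + (1 - t) * x.1)) -
        (t * z.1 + (1 - t) * x.1) * (y.2 - (t * z.2 + (1 - t) * x.2))) := by
      funext t
      simp [Prod.smul_fst, Prod.smul_snd, Prod.fst_add, Prod.snd_add, smul_eq_mul]
    rw [heq]
    have hcont : Continuous (fun t : ℝ => c * ((t * z.2 + (1 - t) * x.2) * (y.1 - (t * z.1 + (1 - t) * x.1)) -
        (t * z.1 + (1 - t) * x.1) * (y.2 - (t * z.2 + (1 - t) * x.2)))) := by fun_prop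
    have htend : Tendsto (fun t : ℝ => c * ((t * z.2 + (1 - t) * x.2) * (y.1 - (t * z.1 + (1 - t) * x.1)) -
        (t * z.1 + (1 - t) * x.1) * (y.2 - (t * z.2 + (1 - t) * x.2)))) (𝓝[>] (0:ℝ))
        (𝓝 (c * ((0 * z.2 + (1 - 0) * x.2) * (y.1 - (0 * z.1 + (1 - 0) * x.1)) -
        (0 * z.1 + (1 - 0) * x.1) * (y.2 - (0 * z.2 + (1 - 0) * x.2))))) :=
      (hcont.continuousAt (x := (0:ℝ))).tendsto.mono_left nhdsWithin_le_nhds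
    have hls := htend.limsup_eq
    rw [hls]
    exact le_of_eq (by ring)
  · -- A4
    intro i x _
    constructor
    · exact (by fun_prop : Continuous (fun y : ℝ × ℝ =>
        (if (i : ℕ) = 0 then (1:ℝ) else if (i : ℕ) = 1 then -1 else 0) *
        (x.2 * (y.1 - x.1) - x.1 * (y.2 - x.2)))).lowerSemicontinuous.lowerSemicontinuousOn _
    · refine ⟨convex_Icc _ _, ?_⟩
      intro p _ q _ a b _ _ _
      apply le_of_eq
      simp only [Prod.smul_fst, Prod.smul_snd, Prod.fst_add, Prod.snd_add, smul_eq_mul]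
      ring
  · intro i
    exact ⟨inv_pos.2 hN0, inv_lt_one_of_one_lt₀ hN1⟩
  · simp [Finset.sum_const, Finset.card_univ]
    field_simp
  · -- not subset
    have hsum : ∀ x y : ℝ × ℝ, (∑ i : Fin N, (N:ℝ)⁻¹ *
        ((if (i : ℕ) = 0 then (1:ℝ) else if (i : ℕ) = 1 then -1 else 0) *
        (x.2 * (y.1 - x.1) - x.1 * (y.2 - x.2)))) = 0 := by
      intro x y
      calc (∑ i : Fin N, (N:ℝ)⁻¹ *
          ((if (i : ℕ) = 0 then (1:ℝ) else if (i : ℕ) = 1 then -1 else 0) *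
          (x.2 * (y.1 - x.1) - x.1 * (y.2 - x.2))))
          = (∑ i : Fin N, (if (i : ℕ) = 0 then (1:ℝ) else if (i : ℕ) = 1 then -1 else 0)) *
            ((N:ℝ)⁻¹ * (x.2 * (y.1 - x.1) - x.1 * (y.2 - x.2))) := by
            rw [Finset.sum_mul]; exact Finset.sum_congr rfl (fun i _ => by ring)
        _ = 0 := by rw [sum_c N hN, zero_mul]
    intro h
    have hx1C : ((1,0) : ℝ × ℝ) ∈ Set.Icc ((-1,-1) : ℝ × ℝ) (1,1) := by
      simp [Set.mem_Icc, Prod.le_def]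
    have hy1C : ((0,1) : ℝ × ℝ) ∈ Set.Icc ((-1,-1) : ℝ × ℝ) (1,1) := by
      simp [Set.mem_Icc, Prod.le_def]
    have hmem : ((1,0) : ℝ × ℝ) ∈ Sol (Set.Icc ((-1,-1) : ℝ × ℝ) (1,1))
        (fun x y => ∑ i : Fin N, (N:ℝ)⁻¹ *
          ((if (i : ℕ) = 0 then (1:ℝ) else if (i : ℕ) = 1 then -1 else 0) *
          (x.2 * (y.1 - x.1) - x.1 * (y.2 - x.2)))) := by
      exact ⟨hx1C, fun y _ => le_of_eq (hsum (1,0) y).symm⟩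
    have h0 := Set.mem_iInter.1 (h hmem) ⟨0, by omega⟩
    have hineq := h0.2 (0,1) hy1C
    norm_num at hineq
  · -- nonempty intersection
    refine ⟨(0,0), Set.mem_iInter.2 fun i => ⟨by simp [Set.mem_Icc, Prod.le_def],
      fun y _ => le_of_eq (by ring)⟩⟩
end

section
/- There exist a nonempty closed convex set C ⊆ ℝ² and bifunctions f₁, f₂ : C × C → ℝ, each satisfying conditions (A1)–(A4) (fᵢ(x, x) = 0; fᵢ(x, y) + fᵢ(y, x) ≤ 0 for all x, y ∈ C; limsup_{t → 0⁺} fᵢ(tz + (1−t)x, y) ≤ fᵢ(x, y); and y ↦ fᵢ(x, y) lower semicontinuous and convex), with Sol(C, f₁) ∩ Sol(C, f₂) ≠ ∅, such that Sol(C, (1/2) f₁ + (1/2) f₂) ≠ Sol(C, f₁) ∩ Sol(C, f₂). Hence Lemma 2.7 of Suwannaut–Kangtunyakarn (2013), which asserts that under (A1)–(A4) and nonempty common solution set one always has ∩ᵢ Sol(C, fᵢ) = Sol(C, Σᵢ αᵢ fᵢ), is false. -/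
open Filter Topology

/-- Assumptions (A1)–(A4) for a bifunction on `C`. -/
def SatisfiesA (C : Set (ℝ × ℝ)) (f : ℝ × ℝ → ℝ × ℝ → ℝ) : Prop :=
  (∀ x ∈ C, f x x = 0) ∧
  (∀ x ∈ C, ∀ y ∈ C, f x y + f y x ≤ 0) ∧
  (∀ x ∈ C, ∀ y ∈ C, ∀ z ∈ C,
    Filter.limsup (fun t : ℝ => f (t • z + (1 - t) • x) y) (𝓝[>] (0 : ℝ)) ≤ f x y) ∧
  (∀ x ∈ C, LowerSemicontinuousOn (fun y => f x y) C ∧ ConvexOn ℝ C (fun y => f x y))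

lemma satA (ε : ℝ) :
    SatisfiesA Set.univ (fun x y => ε * (x.1 * (y.2 - x.2) - x.2 * (y.1 - x.1))) := by
  refine ⟨fun x _ => by ring, fun x _ y _ => le_of_eq (by ring), ?_, ?_⟩
  · intro x _ y _ z _
    have hc : Continuous (fun t : ℝ =>
        ε * (((t • z + (1 - t) • x) : ℝ × ℝ).1 * (y.2 - ((t • z + (1 - t) • x) : ℝ × ℝ).2)
          - ((t • z + (1 - t) • x) : ℝ × ℝ).2 * (y.1 - ((t • z + (1 - t) • x) : ℝ × ℝ).1))) := by
      simp only [Prod.fst_add, Prod.snd_add, Prod.smul_fst, Prod.smul_snd, smul_eq_mul]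
      fun_prop
    have ht : Tendsto (fun t : ℝ =>
        ε * (((t • z + (1 - t) • x) : ℝ × ℝ).1 * (y.2 - ((t • z + (1 - t) • x) : ℝ × ℝ).2)
          - ((t • z + (1 - t) • x) : ℝ × ℝ).2 * (y.1 - ((t • z + (1 - t) • x) : ℝ × ℝ).1)))
        (𝓝[>] (0 : ℝ)) (𝓝 (ε * (x.1 * (y.2 - x.2) - x.2 * (y.1 - x.1)))) := by
      have := (hc.tendsto 0).mono_left (nhdsWithin_le_nhds (s := Set.Ioi (0:ℝ)))
      simpa using this
    exact ht.limsup_eq.le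
  · intro x _
    constructor
    · exact (Continuous.lowerSemicontinuous (by fun_prop)).lowerSemicontinuousOn _
    · refine ⟨convex_univ, ?_⟩
      intro u _ v _ a b _ _ hab
      have : a = 1 - b := by linarith
      simp only [Prod.fst_add, Prod.snd_add, Prod.smul_fst, Prod.smul_snd, smul_eq_mul]
      nlinarith [sq_nonneg (a*b)]

/-- there are a nonempty closed convex `C ⊆ ℝ²` and bifunctions
`f₁, f₂` satisfying (A1)–(A4) with nonempty common solution set such that
`Sol(C, (1/2)f₁ + (1/2)f₂) ≠ Sol(C, f₁) ∩ Sol(C, f₂)`; hence Lemma 2.7 of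
Suwannaut–Kangtunyakarn (2013) is false. -/
theorem lemma_2_7_of_SK2013_is_false :
    ∃ (C : Set (ℝ × ℝ)) (f1 f2 : ℝ × ℝ → ℝ × ℝ → ℝ),
      C.Nonempty ∧ IsClosed C ∧ Convex ℝ C ∧
      SatisfiesA C f1 ∧ SatisfiesA C f2 ∧
      (Sol C f1 ∩ Sol C f2).Nonempty ∧
      Sol C (fun x y => (1 / 2) * f1 x y + (1 / 2) * f2 x y) ≠
        Sol C f1 ∩ Sol C f2 := by
  refine ⟨Set.univ,
    (fun x y => (1:ℝ) * (x.1 * (y.2 - x.2) - x.2 * (y.1 - x.1))),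
    (fun x y => (-1:ℝ) * (x.1 * (y.2 - x.2) - x.2 * (y.1 - x.1))),
    ⟨0, trivial⟩, isClosed_univ, convex_univ, satA 1, satA (-1), ⟨0, ?_, ?_⟩, ?_⟩
  · exact ⟨trivial, fun y _ => by norm_num⟩
  · exact ⟨trivial, fun y _ => by norm_num⟩
  · intro h
    have h1 : ((1:ℝ), (0:ℝ)) ∈ Sol Set.univ
        (fun x y => (1 / 2) * ((1:ℝ) * (x.1 * (y.2 - x.2) - x.2 * (y.1 - x.1)))
          + (1 / 2) * ((-1:ℝ) * (x.1 * (y.2 - x.2) - x.2 * (y.1 - x.1)))) :=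
      ⟨trivial, fun y _ => by ring_nf; norm_num⟩
    rw [h] at h1
    have h2 := h1.1.2 ((1:ℝ), (-1:ℝ)) trivial
    norm_num at h2
end
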